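/- The expected revenue function R_m(n, p) = p·Σ_{j=0}^n min(m,j) C(n,j)(1-p)^j p^{n-j} is monotone nondecreasing in the number of buyers n (for fixed m and p). -/

import Mathlib

/-!
Write `q = 1 - p`. Conditioning on the valuation of the last buyer (below the price with
probability `p`, above it with probability `q`) gives, for any `f`,
`E_{n+1} f = p • E_n f + q • E_n (f ∘ succ)`, where `E_n f` is the expectation of `f` under
`Binomial(n, q)`. The number of items sold is `min m j`, which is monotone in `j`, so
`E_n (f ∘ succ) ≥ E_n f` and hence `E_{n+1} f ≥ (p + q) • E_n f = E_n f`.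
-/

open Finset

/-- Expected revenue of the fixed-price auction selling `m` items at price `p`
to `n` buyers with i.i.d. Uniform[0,1] valuations. -/
noncomputable def R (m n : ℕ) (p : ℝ) : ℝ :=
  p * ∑ j ∈ range (n + 1),
    (min m j : ℝ) * (n.choose j : ℝ) * (1 - p) ^ j * p ^ (n - j)

section BinomialSum

variable {α : Type*} [CommSemiring α]

/-- With `x + y = 1` and `x, y ≥ 0`, this is the expectation of `f` under `Binomial(n, x)`. -/
def binomialSum (f : ℕ → α) (x y : α) (n : ℕ) : α :=
  ∑ j ∈ range (n + 1), f j * (n.choose j : α) * x ^ j * y ^ (n - j)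

theorem binomialSum_succ (f : ℕ → α) (x y : α) (n : ℕ) :
    binomialSum f x y (n + 1) =
      y * binomialSum f x y n + x * binomialSum (fun j => f (j + 1)) x y n := by
  have hy : y * binomialSum f x y n =
      ∑ j ∈ range (n + 2), f j * (n.choose j : α) * x ^ j * y ^ (n + 1 - j) := by
    rw [binomialSum, mul_sum, sum_range_succ _ (n + 1), Nat.choose_succ_self, Nat.cast_zero,
      mul_zero, zero_mul, zero_mul, add_zero]
    refine sum_congr rfl fun j hj => ?_
    rw [Nat.sub_add_comm (mem_range_succ_iff.1 hj), pow_succ]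
    ring
  have hx : x * binomialSum (fun j => f (j + 1)) x y n =
      ∑ j ∈ range (n + 1), f (j + 1) * (n.choose j : α) * x ^ (j + 1) * y ^ (n - j) := by
    rw [binomialSum, mul_sum]
    exact sum_congr rfl fun j _ => by ring
  rw [hy, hx, sum_range_succ' _ (n + 1), binomialSum, sum_range_succ' _ (n + 1)]
  simp only [Nat.choose_succ_succ, Nat.cast_add, Nat.choose_zero_right, Nat.succ_sub_succ]
  simp only [add_mul, mul_add, sum_add_distrib]
  ring

theorem binomialSum_le_binomialSum_shift [PartialOrder α] [IsOrderedRing α]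
    {f : ℕ → α} (hf : Monotone f) {x y : α} (hx : 0 ≤ x) (hy : 0 ≤ y) (n : ℕ) :
    binomialSum f x y n ≤ binomialSum (fun j => f (j + 1)) x y n := by
  unfold binomialSum
  gcongr with j
  exact hf j.le_succ

theorem binomialSum_monotone [PartialOrder α] [IsOrderedRing α]
    {f : ℕ → α} (hf : Monotone f) {x y : α} (hx : 0 ≤ x) (hy : 0 ≤ y) (hxy : x + y = 1) :
    Monotone (binomialSum f x y) := by
  refine monotone_nat_of_le_succ fun n => ?_
  calc binomialSum f x y n = y * binomialSum f x y n + x * binomialSum f x y n := by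
        rw [← add_mul, add_comm y, hxy, one_mul]
    _ ≤ y * binomialSum f x y n + x * binomialSum (fun j => f (j + 1)) x y n := by
        gcongr
        exact binomialSum_le_binomialSum_shift hf hx hy n
    _ = binomialSum f x y (n + 1) := (binomialSum_succ f x y n).symm

end BinomialSum

/-- The expected revenue is monotone nondecreasing in the number of buyers `n`
(for fixed `m` and `p ∈ [0,1]`). -/
theorem stmt_8 (m : ℕ) (p : ℝ) (hp : p ∈ Set.Icc (0:ℝ) 1) :
    Monotone (fun n : ℕ => R m n p) := by
  obtain ⟨hp0, hp1⟩ := hp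
  have hsold : Monotone fun j : ℕ => (min m j : ℝ) := monotone_const.min Nat.mono_cast
  exact (binomialSum_monotone hsold (sub_nonneg.2 hp1) hp0 (sub_add_cancel 1 p)).const_mul hp0
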